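/- Let L be a finite co-Heyting algebra of dimension ≤ 1 (every join-irreducible element is maximal or minimal in the poset of join irreducibles), and let a ∈ L satisfy a = ⊤ \ (⊤ \ a) and a ≠ ⊥. Then there exists a finite co-Heyting algebra L' of dimension ≤ 1 containing L as a subalgebra and a nonzero b ∈ L' with b ≪ a. -/

import Mathlib

/-- `Ll b a` means `b ≪ a`: `a \ b = a` and `b ≤ a`. -/
def Ll {L : Type*} [CoheytingAlgebra L] (b a : L) : Prop := a \ b = a ∧ b ≤ a

/-- An embedding of co-Heyting algebras: injective and preserving `⊥`, `⊤`, `⊔`, `⊓`, `\`. -/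
def IsCoheytingEmb {K L : Type*} [CoheytingAlgebra K] [CoheytingAlgebra L] (f : K → L) : Prop :=
  Function.Injective f ∧ f ⊥ = ⊥ ∧ f ⊤ = ⊤ ∧
    (∀ a b, f (a ⊔ b) = f a ⊔ f b) ∧ (∀ a b, f (a ⊓ b) = f a ⊓ f b) ∧
    (∀ a b, f (a \ b) = f a \ f b)

/-- Every join-irreducible element is maximal or minimal among join irreducibles
(dimension ≤ 1). -/
def DimLeOne (L : Type*) [CoheytingAlgebra L] : Prop :=
  ∀ x : L, SupIrred x →
    ((∀ y : L, SupIrred y → x ≤ y → x = y) ∨ (∀ y : L, SupIrred y → y ≤ x → y = x))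

/-- There is an embedding `f` of `L` into `K` and a nonzero `b` in `K` with `b ≪ f a`. -/
def D3Ext (L : Type*) [CoheytingAlgebra L] (K : Type*) [CoheytingAlgebra K] (a : L) : Prop :=
  ∃ (f : L → K) (b : K), IsCoheytingEmb f ∧ b ≠ ⊥ ∧ Ll b (f a)

/-
A regular element `a ≠ ⊥` lies above a maximal join-irreducible `p`: otherwise every
join-irreducible lies below a maximal one outside `a`, hence below `⊤ \ a`, so `⊤ \ a = ⊤` and
`a = ⊤ \ (⊤ \ a) = ⊥`. Adjoin a new join-irreducible atom `c` below `p` alone. As `p` is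
join-prime, `x ↦ (x, p ≤ x)` embeds `L` as a co-Heyting subalgebra, and `a \ c = a` because `c`
lies below the point `p` of `a`. The new point is minimal and sits only below the maximal `p`, so
the dimension stays at most one. Finally the finite extension is transported to `Type`.
-/

open Function

section Embeddings

variable {K L M : Type*} [CoheytingAlgebra K] [CoheytingAlgebra L] [CoheytingAlgebra M]

theorem IsCoheytingEmb.of_injective {F : Type*} [FunLike F K L] [CoheytingHomClass F K L]
    (f : F) (hf : Injective f) : IsCoheytingEmb f :=
  ⟨hf, map_bot f, map_top f, map_sup f, map_inf f, map_sdiff f⟩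

theorem IsCoheytingEmb.comp {g : L → M} {f : K → L} (hg : IsCoheytingEmb g)
    (hf : IsCoheytingEmb f) : IsCoheytingEmb (g ∘ f) := by
  obtain ⟨hg, hg0, hg1, hgsup, hginf, hgsdiff⟩ := hg
  obtain ⟨hf, hf0, hf1, hfsup, hfinf, hfsdiff⟩ := hf
  refine ⟨hg.comp hf, ?_, ?_, ?_, ?_, ?_⟩ <;> simp [*]

theorem IsCoheytingEmb.monotone {f : K → L} (hf : IsCoheytingEmb f) : Monotone f :=
  fun x y h => calc
    f x ≤ f x ⊔ f y := le_sup_left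
    _ = f y := by rw [← hf.2.2.2.1, sup_eq_right.2 h]

theorem IsCoheytingEmb.supIrred_of_apply {f : K → L} (hf : IsCoheytingEmb f) {x : K}
    (h : SupIrred (f x)) : SupIrred x := by
  refine ⟨fun hx => h.1 (by rw [hx.eq_bot, hf.2.1]; exact isMin_bot), fun b c hbc => ?_⟩
  exact (h.2 (by rw [← hf.2.2.2.1, hbc])).imp (hf.1 ·) (hf.1 ·)

theorem D3Ext.map {a : K} (h : D3Ext K L a) {g : L → M} (hg : IsCoheytingEmb g) :
    D3Ext K M a := by
  obtain ⟨f, b, hf, hb, hba, hle⟩ := h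
  refine ⟨g ∘ f, g b, hg.comp hf, ?_, ?_, hg.monotone hle⟩
  · rwa [← hg.2.1, hg.1.ne_iff]
  · simp only [comp_apply, ← hg.2.2.2.2.2, hba]

end Embeddings

theorem SupIrred.map_orderIso {α β : Type*} [SemilatticeSup α] [SemilatticeSup β] {x : α}
    (hx : SupIrred x) (e : α ≃o β) : SupIrred (e x) := by
  refine ⟨fun hmin => hx.1 (e.isMin_apply.1 hmin), fun b c hbc => ?_⟩
  obtain ⟨b, rfl⟩ := e.surjective b
  obtain ⟨c, rfl⟩ := e.surjective c
  rw [← map_sup e, e.injective.eq_iff] at hbc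
  simpa only [e.injective.eq_iff] using hx.2 hbc

theorem DimLeOne.of_orderIso {K L : Type*} [CoheytingAlgebra K] [CoheytingAlgebra L]
    (e : K ≃o L) (h : DimLeOne K) : DimLeOne L := by
  intro x hx
  rcases h (e.symm x) (hx.map_orderIso e.symm) with hmax | hmin
  · exact .inl fun y hy hxy => by
      simpa using congrArg e (hmax _ (hy.map_orderIso e.symm) (e.symm.monotone hxy))
  · exact .inr fun y hy hyx => by
      simpa using congrArg e (hmin _ (hy.map_orderIso e.symm) (e.symm.monotone hyx))

theorem D3Ext.exists_type {L K : Type*} [CoheytingAlgebra L] [CoheytingAlgebra K] [Finite K]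
    {a : L} (h : D3Ext L K a) (hK : DimLeOne K) :
    ∃ (L' : Type) (inst : CoheytingAlgebra L'),
      Finite L' ∧ @DimLeOne L' inst ∧ @D3Ext L _ L' inst a := by
  obtain ⟨M, ⟨e⟩⟩ := Small.equiv_small.{0} (α := K)
  let := e.symm.coheytingAlgebra
  let iso : K ≃o M := ⟨e, fun {x y} => by
    show e.symm (e x) ≤ e.symm (e y) ↔ x ≤ y
    simp⟩
  exact ⟨M, _, .of_equiv K e, hK.of_orderIso iso, h.map (.of_injective iso iso.injective)⟩

section Regular

variable {L : Type*}

theorem le_of_forall_supIrred_le [Lattice L] [OrderBot L] [WellFoundedLT L] {a b : L}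
    (h : ∀ s, SupIrred s → s ≤ a → s ≤ b) : a ≤ b := by
  obtain ⟨s, rfl, hs⟩ := exists_supIrred_decomposition a
  exact Finset.sup_le fun q hq => h q (hs hq) (Finset.le_sup (f := id) hq)

theorem exists_maximal_supIrred_le_of_regular [CoheytingAlgebra L] [Finite L] {a : L}
    (h1 : a = ⊤ \ (⊤ \ a)) (h2 : a ≠ ⊥) : ∃ p, Maximal SupIrred p ∧ p ≤ a := by
  by_contra! hno
  suffices ⊤ \ a = ⊤ from h2 (by rw [h1, this, sdiff_self])
  refine top_le_iff.1 (le_of_forall_supIrred_le fun s hs _ => ?_)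
  obtain ⟨m, hsm, hm⟩ := Finite.exists_le_maximal hs
  have hm' : SupPrime m := supPrime_iff_supIrred.2 hm.prop
  exact hsm.trans ((hm'.le_sup.1 (le_top.trans le_sup_sdiff)).resolve_left (hno m hm))

end Regular

/-- `L` with a new join-irreducible atom `(⊥, True)` adjoined below `p`: the flag of `(x, t)`
says whether the new atom lies below it, which it must as soon as `p ≤ x`. -/
def adjoinAtomBelow {L : Type*} [Lattice L] {p : L} (hp : SupPrime p) : Sublattice (L × Prop) where
  carrier := {z | p ≤ z.1 → z.2}
  supClosed' _ hx _ hy h := (hp.le_sup.1 h).imp hx hy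
  infClosed' _ hx _ hy h := ⟨hx (h.trans inf_le_left), hy (h.trans inf_le_right)⟩

namespace adjoinAtomBelow

variable {L : Type*} [CoheytingAlgebra L] {p : L} (hp : SupPrime p)

instance : BoundedOrder (adjoinAtomBelow hp) :=
  Subtype.boundedOrder (fun h => hp.ne_bot (le_bot_iff.1 h)) fun _ => trivial

variable {hp} in
theorem ext_iff {A B : adjoinAtomBelow hp} : A = B ↔ A.1.1 = B.1.1 ∧ (A.1.2 ↔ B.1.2) := by
  rw [← Subtype.coe_inj, Prod.ext_iff, eq_iff_iff]

/-- The flag of `A \ B` also holds when `p ≤ A \ B`, which keeps the difference inside the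
sublattice. -/
noncomputable instance : CoheytingAlgebra (adjoinAtomBelow hp) :=
  CoheytingAlgebra.ofSDiff
    (fun A B => ⟨(A.1.1 \ B.1.1, A.1.2 ∧ ¬B.1.2 ∨ p ≤ A.1.1 \ B.1.1), Or.inr⟩)
    fun ⟨(x, t), _⟩ ⟨(y, s), _⟩ ⟨(z, w), hC⟩ => by
      change x \ y ≤ z ∧ (t ∧ ¬s ∨ p ≤ x \ y → w) ↔ x ≤ y ⊔ z ∧ (t → s ∨ w)
      rw [sdiff_le_iff, or_imp, and_imp]
      refine and_congr_right fun hx => ⟨fun ⟨h, _⟩ ht => or_iff_not_imp_left.2 (h ht), ?_⟩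
      exact fun h => ⟨fun ht hs => (h ht).resolve_left hs,
        fun hpxy => hC (hpxy.trans (sdiff_le_iff.2 hx))⟩

def embed (x : L) : adjoinAtomBelow hp := ⟨(x, p ≤ x), id⟩

def atom : adjoinAtomBelow hp := ⟨(⊥, True), fun _ => trivial⟩

variable {hp}

theorem isCoheytingEmb_embed : IsCoheytingEmb (embed hp) := by
  refine ⟨fun x y h => congrArg (·.1.1) h, ?_, ?_, fun x y => ?_, fun x y => ?_, fun x y => ?_⟩ <;>
    refine ext_iff.2 ⟨rfl, ?_⟩
  · exact iff_false_intro fun h => hp.ne_bot (le_bot_iff.1 h)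
  · exact iff_of_true le_top trivial
  · exact hp.le_sup
  · exact le_inf_iff
  · refine ⟨Or.inr, ?_⟩
    rintro (⟨hx, hy⟩ | h)
    · exact (hp.le_sup.1 (hx.trans le_sup_sdiff)).resolve_left hy
    · exact h

theorem atom_ne_bot : atom hp ≠ ⊥ := fun h => (ext_iff.1 h).2.1 trivial

theorem ll_atom_embed {a : L} (ha : p ≤ a) : Ll (atom hp) (embed hp a) := by
  refine ⟨ext_iff.2 ⟨sdiff_bot, ?_⟩, bot_le, fun _ => ha⟩
  change p ≤ a ∧ ¬True ∨ p ≤ a \ ⊥ ↔ p ≤ a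
  simp

theorem supIrred_cases {A : adjoinAtomBelow hp} (hA : SupIrred A) :
    A = atom hp ∨ ∃ x, SupIrred x ∧ A = embed hp x := by
  obtain ⟨⟨x, t⟩, hxt⟩ := A
  by_cases hx : x = ⊥
  · refine .inl (ext_iff.2 ⟨hx, iff_true_intro ?_⟩)
    by_contra ht
    exact hA.ne_bot (ext_iff.2 ⟨hx, iff_false_intro ht⟩)
  · have hpx : t → p ≤ x := fun ht => by
      by_contra hpx
      have hsplit : (⟨(x, False), fun h => hpx h⟩ : adjoinAtomBelow hp) ⊔ atom hp = ⟨(x, t), hxt⟩ :=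
        ext_iff.2 ⟨sup_bot_eq x, iff_of_true (.inr trivial) ht⟩
      rcases hA.2 hsplit with h | h
      · exact (ext_iff.1 h).2.2 ht
      · exact hx (ext_iff.1 h).1.symm
    have hA' : (⟨(x, t), hxt⟩ : adjoinAtomBelow hp) = embed hp x := ext_iff.2 ⟨rfl, hpx, hxt⟩
    exact .inr ⟨x, isCoheytingEmb_embed.supIrred_of_apply (hA' ▸ hA), hA'⟩

theorem embed_le_embed {x y : L} : embed hp x ≤ embed hp y ↔ x ≤ y :=
  ⟨And.left, fun h => ⟨h, fun hx => hx.trans h⟩⟩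

theorem atom_le_embed {x : L} : atom hp ≤ embed hp x ↔ p ≤ x :=
  ⟨fun h => h.2 trivial, fun h => ⟨bot_le, fun _ => h⟩⟩

theorem not_embed_le_atom {x : L} (hx : x ≠ ⊥) : ¬embed hp x ≤ atom hp :=
  fun h => hx (le_bot_iff.1 h.1)

theorem dimLeOne (hmax : Maximal SupIrred p) (hdim : DimLeOne L) :
    DimLeOne (adjoinAtomBelow hp) := by
  intro A hA
  rcases supIrred_cases hA with rfl | ⟨x, hx, rfl⟩
  · refine .inr fun B hB hBA => ?_
    rcases supIrred_cases hB with rfl | ⟨y, hy, rfl⟩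
    · rfl
    · exact (not_embed_le_atom hy.ne_bot hBA).elim
  have embed_max : (∀ y, SupIrred y → x ≤ y → x = y) →
      ∀ B, SupIrred B → embed hp x ≤ B → embed hp x = B := fun hxmax B hB hxB => by
    rcases supIrred_cases hB with rfl | ⟨y, hy, rfl⟩
    · exact (not_embed_le_atom hx.ne_bot hxB).elim
    · rw [hxmax y hy (embed_le_embed.1 hxB)]
  by_cases hpx : p ≤ x
  · exact .inl <| embed_max fun y hy hxy =>
      (hmax.eq_of_le hx hpx).symm.trans (hmax.eq_of_le hy (hpx.trans hxy))
  rcases hdim x hx with hxmax | hxmin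
  · exact .inl (embed_max hxmax)
  · refine .inr fun B hB hBx => ?_
    rcases supIrred_cases hB with rfl | ⟨y, hy, rfl⟩
    · exact (hpx (atom_le_embed.1 hBx)).elim
    · rw [hxmin y hy (embed_le_embed.1 hBx)]

end adjoinAtomBelow

theorem density_extension_exists_dim_le_one (L : Type*) [CoheytingAlgebra L] [Finite L]
    (hdim : DimLeOne L) (a : L) (h1 : a = ⊤ \ (⊤ \ a)) (h2 : a ≠ ⊥) :
    ∃ (L' : Type) (inst : CoheytingAlgebra L'),
      Finite L' ∧ @DimLeOne L' inst ∧ @D3Ext L _ L' inst a := by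
  obtain ⟨p, hmax, hpa⟩ := exists_maximal_supIrred_le_of_regular h1 h2
  have hp : SupPrime p := supPrime_iff_supIrred.2 hmax.prop
  have hext : D3Ext L (adjoinAtomBelow hp) a :=
    ⟨_, _, adjoinAtomBelow.isCoheytingEmb_embed, adjoinAtomBelow.atom_ne_bot,
      adjoinAtomBelow.ll_atom_embed hpa⟩
  exact hext.exists_type (adjoinAtomBelow.dimLeOne hmax hdim)
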